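/- arXiv:1311.2563 — 3 statements merged into one kernel-verified Lean document; each statement's English description precedes it below -/
import Mathlib

section
/- Let G be a connected finite simple graph, k a positive integer, S ⊆ V(G), let 𝒞 be the family of all inclusion-wise maximal chips, and let A = (⋂_{C ∈ 𝒞} (V(G) ∖ N_G[C])) ∪ ⋃_{C ∈ 𝒞} N_G(C), with A = V(G) when 𝒞 = ∅. Then for every connected component D of G − A it holds that |N_G(D)| ≤ 3k·(3k·4^{3k}+1). -/
open SimpleGraph

variable {V : Type*}

/-- The open neighbourhood `N_G(C)` of a vertex set `C`:
vertices outside `C` with a neighbour in `C`. -/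
def setNbhd (G : SimpleGraph V) (C : Set V) : Set V :=
  {v | v ∉ C ∧ ∃ u ∈ C, G.Adj u v}

/-- The closed neighbourhood `N_G[C] = C ∪ N_G(C)`. -/
def closedNbhd (G : SimpleGraph V) (C : Set V) : Set V :=
  C ∪ setNbhd G C

/-- `W` is `(q,k)`-unbreakable in the induced subgraph `G[U]`:
every separation `(A,B)` of `G[U]` of order at most `k` has
`|(A∖B) ∩ W| ≤ q` or `|(B∖A) ∩ W| ≤ q`. -/
def UnbreakableIn (G : SimpleGraph V) (U W : Set V) (q k : ℕ) : Prop :=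
  ∀ A B : Set V, A ∪ B = U →
    (∀ a ∈ A \ B, ∀ b ∈ B \ A, ¬ G.Adj a b) →
    (A ∩ B).ncard ≤ k →
    ((A \ B) ∩ W).ncard ≤ q ∨ ((B \ A) ∩ W).ncard ≤ q

/-- `W` is `(q,k)`-unbreakable in `G`. -/
def Unbreakable (G : SimpleGraph V) (W : Set V) (q k : ℕ) : Prop :=
  UnbreakableIn G Set.univ W q k

/-- `x` and `y` lie in the same connected component of `G − W`. -/
def ReachAvoid (G : SimpleGraph V) (W : Set V) (x y : V) : Prop :=
  ∃ (hx : x ∈ Wᶜ) (hy : y ∈ Wᶜ), (G.induce Wᶜ).Reachable ⟨x, hx⟩ ⟨y, hy⟩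

/-- `W` is an `X–Y` separator: no connected component of `G − W` contains
a vertex of `X∖W` and a vertex of `Y∖W`. -/
def IsSeparator (G : SimpleGraph V) (X Y W : Set V) : Prop :=
  ∀ x ∈ X \ W, ∀ y ∈ Y \ W, ¬ ReachAvoid G W x y

/-- `R_{G−W}(X∖W)`: the set of vertices reachable from `X∖W` in `G − W`. -/
def reachSet (G : SimpleGraph V) (W X : Set V) : Set V :=
  {y | ∃ x ∈ X \ W, ReachAvoid G W x y}

/-- `W` is an important `X–Y` separator. -/
def IsImportantSeparator (G : SimpleGraph V) (X Y W : Set V) : Prop :=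
  IsSeparator G X Y W ∧
  (∀ W' ⊆ W, IsSeparator G X Y W' → W' = W) ∧
  ∀ W' : Set V, IsSeparator G X Y W' → W'.ncard ≤ W.ncard →
    ¬ reachSet G W X ⊂ reachSet G W' X

/-- A chip (w.r.t. `G`, `k` and `S`): `G[C]` is connected, `|N_G(C)| ≤ 3k`,
and `N_G(C)` is an important `C–S` separator. -/
def IsChip (G : SimpleGraph V) (k : ℕ) (S C : Set V) : Prop :=
  (G.induce C).Connected ∧ (setNbhd G C).ncard ≤ 3 * k ∧
  IsImportantSeparator G C S (setNbhd G C)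

/-- The family of all inclusion-wise maximal chips. -/
def maximalChips (G : SimpleGraph V) (k : ℕ) (S : Set V) : Set (Set V) :=
  {C | IsChip G k S C ∧ ∀ C', IsChip G k S C' → C ⊆ C' → C' = C}

/-- Two vertex sets touch: they intersect or some edge joins them. -/
def Touches (G : SimpleGraph V) (C₁ C₂ : Set V) : Prop :=
  (C₁ ∩ C₂).Nonempty ∨ ∃ u ∈ C₁, ∃ v ∈ C₂, G.Adj u v

/-- `D` is a connected component of `G − A`: a maximal set disjoint from `A`
inducing a connected subgraph. -/
def IsCompOf (G : SimpleGraph V) (A D : Set V) : Prop :=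
  D ⊆ Aᶜ ∧ (G.induce D).Connected ∧
  ∀ D', D ⊆ D' → D' ⊆ Aᶜ → (G.induce D').Connected → D' = D

/-- The set `A = (⋂_{C ∈ 𝒞} V(G) ∖ N[C]) ∪ ⋃_{C ∈ 𝒞} N(C)` built from the
maximal chips (equals `V(G)` when there are no chips). -/
def chipBag (G : SimpleGraph V) (k : ℕ) (S : Set V) : Set V :=
  (⋂ C ∈ maximalChips G k S, (closedNbhd G C)ᶜ) ∪
    ⋃ C ∈ maximalChips G k S, setNbhd G C

/-- `η(k) = 3k·(3k·4^{3k}+1)`. -/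
def etaB (k : ℕ) : ℕ := 3 * k * (3 * k * 4 ^ (3 * k) + 1)

/-- `τ(k) = (3k)²·8^{3k} + 2k`. -/
def tauB (k : ℕ) : ℕ := (3 * k) ^ 2 * 8 ^ (3 * k) + 2 * k

/-- `τ′(k) = τ + (C(τ+k,2)·k + k)·k·η`. -/
def tauB' (k : ℕ) : ℕ :=
  tauB k + ((tauB k + k).choose 2 * k + k) * k * etaB k

/-- The tree graph determined by a parent function. -/
def parentGraph {T : Type*} (parent : T → T) : SimpleGraph T where
  Adj t s := t ≠ s ∧ (parent t = s ∨ parent s = t)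
  symm := ⟨fun t s h => ⟨h.1.symm, h.2.symm⟩⟩
  loopless := ⟨fun t h => h.1 rfl⟩

/-- The descendants of `t` (including `t` itself). -/
def descSet {T : Type*} (parent : T → T) (t : T) : Set T :=
  {u | ∃ n : ℕ, parent^[n] u = t}

/-- `γ(t) = ⋃_{u ⪯ t} β(u)`. -/
def gammaSet {T : Type*} (parent : T → T) (β : T → Set V) (t : T) : Set V :=
  ⋃ u ∈ descSet parent t, β u

/-- `σ(t) = ∅` for the root, `β(t) ∩ β(parent t)` otherwise. -/
def sigmaSet {T : Type*} [DecidableEq T] (root : T) (parent : T → T)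
    (β : T → Set V) (t : T) : Set V :=
  if t = root then ∅ else β t ∩ β (parent t)

/-- `(T,β)` (a rooted tree given by `root` and `parent`, with bags `β`)
is a tree decomposition of `G`. -/
structure IsTreeDecomp (G : SimpleGraph V) {T : Type*} (root : T) (parent : T → T)
    (β : T → Set V) : Prop where
  parent_root : parent root = root
  reaches_root : ∀ t : T, ∃ n : ℕ, parent^[n] t = root
  bags_connected : ∀ v : V, ((parentGraph parent).induce {t | v ∈ β t}).Connected
  edge_in_bag : ∀ u v : V, G.Adj u v → ∃ t : T, u ∈ β t ∧ v ∈ β t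

/-!
A vertex of a component `D` of `G - A` lies outside every `N(C)` but inside some `N[C]`, hence in
a maximal chip `C`; as `D` is connected and avoids `N(C) ⊆ A`, `D ⊆ C`. A neighbour of `D` outside
`N(C)` lies in `C ∩ A`, so in `N(C')` for a maximal chip `C'`, and `C'` meets `N(C)`. Thus `N(D)`
is covered by `N(C)` and the neighbourhoods of the maximal chips through the at most `3k` vertices
of `N(C)`. Through a fixed vertex `w` there are at most `4^{3k}` chips: `C ↦ N(C)` is injective
into the important `w–S` separators of size at most `3k`, and there are at most `4^p` important
separators of size at most `p`.
-/

namespace ReachAvoid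

variable {G : SimpleGraph V} {W W' R : Set V} {x y z : V}

lemma refl (hx : x ∉ W) : ReachAvoid G W x x := ⟨hx, hx, .rfl⟩

lemma right_notMem (h : ReachAvoid G W x y) : y ∉ W := h.2.1

lemma trans (h : ReachAvoid G W x y) (h' : ReachAvoid G W y z) : ReachAvoid G W x z :=
  let ⟨hx, _, hxy⟩ := h
  let ⟨_, hz, hyz⟩ := h'
  ⟨hx, hz, hxy.trans hyz⟩

lemma of_adj (hx : x ∉ W) (hy : y ∉ W) (hxy : G.Adj x y) : ReachAvoid G W x y :=
  ⟨hx, hy, Adj.reachable (by simpa using hxy)⟩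

lemma mono (hW : W' ⊆ W) (h : ReachAvoid G W x y) : ReachAvoid G W' x y :=
  let ⟨hx, hy, hxy⟩ := h
  ⟨fun h' => hx (hW h'), fun h' => hy (hW h'),
    hxy.map (G.induceHomOfLE (Set.compl_subset_compl.2 hW)).toHom⟩

lemma mem_of_closed (h : ReachAvoid G W x y) (hx : x ∈ R)
    (hR : ∀ a ∈ R, ∀ b, G.Adj a b → b ∉ W → b ∈ R) : y ∈ R := by
  obtain ⟨hx', _, hxy⟩ := h
  rw [reachable_iff_reflTransGen] at hxy
  suffices ∀ b : ↥Wᶜ, Relation.ReflTransGen (G.induce Wᶜ).Adj ⟨x, hx'⟩ b → b.1 ∈ R from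
    this _ hxy
  intro b hb
  induction hb with
  | refl => exact hx
  | @tail _ c _ hbc ih => exact hR _ ih _ (by simpa using hbc) c.2

lemma mem_of_setNbhd_subset (h : ReachAvoid G W x y) (hx : x ∈ R) (hR : setNbhd G R ⊆ W) :
    y ∈ R :=
  h.mem_of_closed hx fun a ha _ hab hb => by_contra fun hbR => hb (hR ⟨hbR, a, ha, hab⟩)

lemma of_forall_notMem (h : ReachAvoid G W x y) (hW' : ∀ z, ReachAvoid G W x z → z ∉ W') :
    ReachAvoid G W' x y :=
  (h.mem_of_closed (R := {z | ReachAvoid G W' x z ∧ ReachAvoid G W x z})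
    ⟨refl (hW' x (refl h.1)), refl h.1⟩
    fun _ ⟨ha', ha⟩ b hab hb =>
      have hxb := ha.trans (of_adj ha.2.1 hb hab)
      ⟨ha'.trans (of_adj ha'.2.1 (hW' b hxb) hab), hxb⟩).1

end ReachAvoid

lemma reachAvoid_of_connected {G : SimpleGraph V} {C W : Set V} {x y : V}
    (hC : (G.induce C).Connected) (hx : x ∈ C) (hy : y ∈ C) (hCW : Disjoint C W) :
    ReachAvoid G W x y :=
  have hCW' : C ⊆ Wᶜ := hCW.subset_compl_right
  ⟨hCW' hx, hCW' hy, (hC.preconnected ⟨x, hx⟩ ⟨y, hy⟩).map (G.induceHomOfLE hCW').toHom⟩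

section reachSet

variable {G : SimpleGraph V} {W W' X X' Y R : Set V} {y z : V}

lemma disjoint_reachSet : Disjoint (reachSet G W X) W :=
  Set.disjoint_left.2 fun _ ⟨_, _, h⟩ => h.right_notMem

lemma sdiff_subset_reachSet : X \ W ⊆ reachSet G W X :=
  fun x hx => ⟨x, hx, .refl hx.2⟩

lemma subset_reachSet_iff : X ⊆ reachSet G W X ↔ Disjoint X W :=
  ⟨fun h => disjoint_reachSet.mono_left h,
    fun h _ hx => sdiff_subset_reachSet ⟨hx, Set.disjoint_left.1 h hx⟩⟩

lemma mem_reachSet_of_reachAvoid (hy : y ∈ reachSet G W X) (h : ReachAvoid G W y z) :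
    z ∈ reachSet G W X :=
  let ⟨x, hx, hxy⟩ := hy
  ⟨x, hx, hxy.trans h⟩

lemma mem_reachSet_of_adj (hy : y ∈ reachSet G W X) (hyz : G.Adj y z) (hz : z ∉ W) :
    z ∈ reachSet G W X :=
  mem_reachSet_of_reachAvoid hy (.of_adj (disjoint_reachSet.notMem_of_mem_left hy) hz hyz)

lemma reachSet_mono_source (hX : X ⊆ X') : reachSet G W X ⊆ reachSet G W X' :=
  fun _ ⟨x, hx, hxy⟩ => ⟨x, ⟨hX hx.1, hx.2⟩, hxy⟩

lemma reachSet_anti (hW : W' ⊆ W) : reachSet G W X ⊆ reachSet G W' X :=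
  fun _ ⟨x, hx, hxy⟩ => ⟨x, ⟨hx.1, fun h => hx.2 (hW h)⟩, hxy.mono hW⟩

lemma reachSet_eq_of_subset (hX : X ⊆ X') (hX' : X' ⊆ reachSet G W X) :
    reachSet G W X' = reachSet G W X :=
  (Set.Subset.antisymm (reachSet_mono_source hX)
    fun _ ⟨_, hx, hxy⟩ => mem_reachSet_of_reachAvoid (hX' hx.1) hxy).symm

lemma setNbhd_reachSet_subset : setNbhd G (reachSet G W X) ⊆ W :=
  fun _ ⟨hz, _, hy, hyz⟩ => by_contra fun hzW => hz (mem_reachSet_of_adj hy hyz hzW)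

lemma disjoint_setNbhd : Disjoint (setNbhd G R) R :=
  Set.disjoint_left.2 fun _ h => h.1

lemma reachSet_subset_of_setNbhd_subset (hX : X \ W ⊆ R) (hR : setNbhd G R ⊆ W) :
    reachSet G W X ⊆ R :=
  fun _ ⟨_, hx, hxy⟩ => hxy.mem_of_setNbhd_subset (hX hx) hR

/-- The paths witnessing the reach run inside the reach set. -/
lemma reachSet_subset_reachSet_of_disjoint (h : Disjoint W' (reachSet G W X)) :
    reachSet G W X ⊆ reachSet G W' X := by
  rintro y ⟨x, hx, hxy⟩
  have hR : ∀ z, ReachAvoid G W x z → z ∉ W' :=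
    fun z hxz => Set.disjoint_left.1 h.symm ⟨x, hx, hxz⟩
  exact ⟨x, ⟨hx.1, hR x (.refl hx.2)⟩, hxy.of_forall_notMem hR⟩

lemma isSeparator_iff_disjoint_reachSet : IsSeparator G X Y W ↔ Disjoint (reachSet G W X) Y := by
  simp only [IsSeparator, Set.disjoint_left, reachSet, Set.mem_ofPred_eq]
  exact ⟨fun h y ⟨x, hx, hxy⟩ hy => h x hx y ⟨hy, hxy.right_notMem⟩ hxy,
    fun h x hx y hy hxy => h ⟨x, hx, hxy⟩ hy.1⟩

lemma isSeparator_setNbhd (hX : X ⊆ R) (hY : Disjoint R Y) : IsSeparator G X Y (setNbhd G R) :=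
  isSeparator_iff_disjoint_reachSet.2 <|
    hY.mono_left (reachSet_subset_of_setNbhd_subset (Set.sdiff_subset.trans hX) le_rfl)

end reachSet

section deleteIncidenceSet

variable {G : SimpleGraph V} {U X Y : Set V} {v x y : V}

lemma reachAvoid_deleteIncidenceSet_iff (hx : x ≠ v) :
    ReachAvoid (G.deleteIncidenceSet v) U x y ↔ ReachAvoid G (insert v U) x y := by
  have hdel : ReachAvoid (G.deleteIncidenceSet v) (insert v U) x y ↔
      ReachAvoid G (insert v U) x y := by
    unfold ReachAvoid
    rw [induce_deleteIncidenceSet_of_notMem G (by simp : v ∉ (insert v U)ᶜ)]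
  refine ⟨fun h => hdel.1 (h.of_forall_notMem fun z hz => ?_), fun h => (hdel.2 h).mono
    (Set.subset_insert v U)⟩
  -- `v` is isolated in `G.deleteIncidenceSet v`, so no path from `x ≠ v` reaches it
  have hzv : z ∈ ({v}ᶜ : Set V) := hz.mem_of_closed hx fun _ _ b hab _ =>
    (deleteIncidenceSet_adj.1 hab).2.2
  exact fun hzU => (Set.mem_insert_iff.1 hzU).elim hzv hz.right_notMem

lemma reachSet_deleteIncidenceSet (hv : v ∉ X) :
    reachSet (G.deleteIncidenceSet v) U X = reachSet G (insert v U) X := by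
  ext y
  constructor
  · rintro ⟨x, ⟨hxX, hxU⟩, h⟩
    have hxv : x ≠ v := ne_of_mem_of_not_mem hxX hv
    exact ⟨x, ⟨hxX, by simp [hxv, hxU]⟩, (reachAvoid_deleteIncidenceSet_iff hxv).1 h⟩
  · rintro ⟨x, ⟨hxX, hxU⟩, h⟩
    exact ⟨x, ⟨hxX, fun h' => hxU (Set.mem_insert_of_mem v h')⟩,
      (reachAvoid_deleteIncidenceSet_iff (ne_of_mem_of_not_mem hxX hv)).2 h⟩

lemma isSeparator_deleteIncidenceSet_iff (hv : v ∉ X) :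
    IsSeparator (G.deleteIncidenceSet v) X Y U ↔ IsSeparator G X Y (insert v U) := by
  rw [isSeparator_iff_disjoint_reachSet, isSeparator_iff_disjoint_reachSet,
    reachSet_deleteIncidenceSet hv]

end deleteIncidenceSet

section submodular

variable (G : SimpleGraph V) (R₁ R₂ : Set V)

lemma setNbhd_inter_union_setNbhd_union_subset :
    setNbhd G (R₁ ∩ R₂) ∪ setNbhd G (R₁ ∪ R₂) ⊆ setNbhd G R₁ ∪ setNbhd G R₂ := by
  rintro v (⟨hv, u, ⟨hu₁, hu₂⟩, huv⟩ | ⟨hv, u, hu | hu, huv⟩)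
  · by_cases hv₁ : v ∈ R₁
    · exact Or.inr ⟨fun hv₂ => hv ⟨hv₁, hv₂⟩, u, hu₂, huv⟩
    · exact Or.inl ⟨hv₁, u, hu₁, huv⟩
  · exact Or.inl ⟨fun h => hv (Or.inl h), u, hu, huv⟩
  · exact Or.inr ⟨fun h => hv (Or.inr h), u, hu, huv⟩

lemma setNbhd_inter_inter_setNbhd_union_subset :
    setNbhd G (R₁ ∩ R₂) ∩ setNbhd G (R₁ ∪ R₂) ⊆ setNbhd G R₁ ∩ setNbhd G R₂ :=
  fun _ ⟨⟨_, u, ⟨hu₁, hu₂⟩, huv⟩, hv, _⟩ =>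
    ⟨⟨fun h => hv (Or.inl h), u, hu₁, huv⟩, ⟨fun h => hv (Or.inr h), u, hu₂, huv⟩⟩

lemma ncard_setNbhd_inter_add_ncard_setNbhd_union_le [Finite V] :
    (setNbhd G (R₁ ∩ R₂)).ncard + (setNbhd G (R₁ ∪ R₂)).ncard ≤
      (setNbhd G R₁).ncard + (setNbhd G R₂).ncard := by
  rw [← Set.ncard_inter_add_ncard_union, ← Set.ncard_inter_add_ncard_union (setNbhd G R₁)]
  exact add_le_add (Set.ncard_le_ncard (setNbhd_inter_inter_setNbhd_union_subset G R₁ R₂))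
    (Set.ncard_le_ncard (setNbhd_inter_union_setNbhd_union_subset G R₁ R₂))

end submodular

section importantSeparator

variable {G : SimpleGraph V} {W X X₀ Y : Set V}

lemma IsImportantSeparator.setNbhd_reachSet (h : IsImportantSeparator G X Y W)
    (hWX : Disjoint W X) : setNbhd G (reachSet G W X) = W :=
  h.2.1 _ setNbhd_reachSet_subset <| isSeparator_setNbhd (subset_reachSet_iff.2 hWX.symm)
    (isSeparator_iff_disjoint_reachSet.1 h.1)

lemma IsImportantSeparator.of_subset_source (h : IsImportantSeparator G X Y W)
    (hX : X₀ ⊆ X) (hreach : X ⊆ reachSet G W X₀) : IsImportantSeparator G X₀ Y W := by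
  obtain ⟨hsep, hmin, himp⟩ := h
  have hsame : ∀ U ⊆ W, reachSet G U X = reachSet G U X₀ :=
    fun U hU => reachSet_eq_of_subset hX (hreach.trans (reachSet_anti hU))
  have hWX : reachSet G W X = reachSet G W X₀ := hsame W le_rfl
  refine ⟨?_, fun U hU hUsep => hmin U hU ?_, fun U hUsep hUW hlt => ?_⟩
  · rwa [isSeparator_iff_disjoint_reachSet, ← hWX, ← isSeparator_iff_disjoint_reachSet]
  · rwa [isSeparator_iff_disjoint_reachSet, hsame U hU, ← isSeparator_iff_disjoint_reachSet]
  · have hUX : reachSet G U X = reachSet G U X₀ :=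
      reachSet_eq_of_subset hX (hreach.trans hlt.subset)
    refine himp U ?_ hUW (by rwa [hWX, hUX])
    rwa [isSeparator_iff_disjoint_reachSet, hUX, ← isSeparator_iff_disjoint_reachSet]

end importantSeparator

section counting

variable [Finite V] {G : SimpleGraph V} {X X' Y T U W : Set V} {p : ℕ} {v : V}

/-- `X'` is the source enlarged during the branching; importance is still measured from `X`. -/
def importantSepsReaching (G : SimpleGraph V) (X Y X' : Set V) (p : ℕ) : Set (Set V) :=
  {W | IsImportantSeparator G X Y W ∧ W.ncard ≤ p ∧ X' ⊆ reachSet G W X}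

def IsFurthestMinSeparator (G : SimpleGraph V) (X Y T : Set V) : Prop :=
  IsSeparator G X Y T ∧ Disjoint T X ∧
  ∀ U, IsSeparator G X Y U → Disjoint U X →
    T.ncard ≤ U.ncard ∧ (U.ncard ≤ T.ncard → (reachSet G U X).ncard ≤ (reachSet G T X).ncard)

omit [Finite V] in
lemma isSeparator_of_mem_importantSepsReaching (hXX' : X ⊆ X')
    (hW : W ∈ importantSepsReaching G X Y X' p) : IsSeparator G X' Y W ∧ Disjoint W X' := by
  obtain ⟨⟨hsep, -⟩, -, hX'W⟩ := hW
  refine ⟨?_, (disjoint_reachSet.mono_left hX'W).symm⟩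
  rwa [isSeparator_iff_disjoint_reachSet, reachSet_eq_of_subset hXX' hX'W,
    ← isSeparator_iff_disjoint_reachSet]

lemma exists_isFurthestMinSeparator (h : ∃ U, IsSeparator G X Y U ∧ Disjoint U X) :
    ∃ T, IsFurthestMinSeparator G X Y T := by
  set P := {U | IsSeparator G X Y U ∧ Disjoint U X}
  obtain ⟨T₀, hT₀, hmin⟩ := (Set.toFinite P).exists_minimalFor Set.ncard P h
  obtain ⟨T, ⟨hT, hTT₀⟩, hmax⟩ := (Set.toFinite {U ∈ P | U.ncard ≤ T₀.ncard}).exists_maximalFor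
    (fun U => (reachSet G U X).ncard) _ ⟨T₀, hT₀, le_rfl⟩
  have hT₀U : ∀ U ∈ P, T₀.ncard ≤ U.ncard := fun U hU =>
    (le_total T₀.ncard U.ncard).elim id (hmin hU)
  refine ⟨T, hT.1, hT.2, fun U hU hUX => ⟨hTT₀.trans (hT₀U U ⟨hU, hUX⟩), fun hUT => ?_⟩⟩
  exact (le_total (reachSet G U X).ncard (reachSet G T X).ncard).elim id
    (hmax ⟨⟨hU, hUX⟩, hUT.trans hTT₀⟩)

namespace IsFurthestMinSeparator

lemma setNbhd_reachSet (hT : IsFurthestMinSeparator G X Y T) :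
    setNbhd G (reachSet G T X) = T := by
  have hX : X ⊆ reachSet G T X := subset_reachSet_iff.2 hT.2.1.symm
  exact Set.eq_of_subset_of_ncard_le setNbhd_reachSet_subset
    (hT.2.2 _ (isSeparator_setNbhd hX (isSeparator_iff_disjoint_reachSet.1 hT.1))
      (disjoint_setNbhd.mono_right hX)).1

/-- Otherwise, by submodularity of `|N(·)|`, `N(R(T) ∪ R(W))` would be a separator no larger than
`W` with strictly larger reach. -/
lemma reachSet_subset (hT : IsFurthestMinSeparator G X' Y T) (hXX' : X ⊆ X')
    (hW : W ∈ importantSepsReaching G X Y X' p) : reachSet G T X' ⊆ reachSet G W X := by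
  obtain ⟨⟨hWsep, -, himp⟩, -, hX'W⟩ := hW
  set Rs := reachSet G T X'
  set R := reachSet G W X
  have hX'Rs : X' ⊆ Rs := subset_reachSet_iff.2 hT.2.1.symm
  have hRsY : Disjoint Rs Y := isSeparator_iff_disjoint_reachSet.1 hT.1
  have hRY : Disjoint R Y := isSeparator_iff_disjoint_reachSet.1 hWsep
  set U := setNbhd G (Rs ∪ R)
  have hUsep : IsSeparator G X Y U :=
    isSeparator_setNbhd ((hXX'.trans hX'W).trans Set.subset_union_right) (hRsY.union_left hRY)
  have hUW : U.ncard ≤ W.ncard := by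
    change (setNbhd G (Rs ∪ R)).ncard ≤ W.ncard
    have hX'I : X' ⊆ Rs ∩ R := Set.subset_inter hX'Rs hX'W
    have hTI := (hT.2.2 _ (isSeparator_setNbhd hX'I (hRsY.mono_left Set.inter_subset_left))
      (disjoint_setNbhd.mono_right hX'I)).1
    have hsub := ncard_setNbhd_inter_add_ncard_setNbhd_union_le G Rs R
    have hRW : (setNbhd G R).ncard ≤ W.ncard := Set.ncard_le_ncard setNbhd_reachSet_subset
    rw [hT.setNbhd_reachSet] at hsub
    omega
  have hRU : R ⊆ reachSet G U X :=
    reachSet_subset_reachSet_of_disjoint (disjoint_setNbhd.mono_right Set.subset_union_right)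
  have hRsU : Rs ⊆ reachSet G U X := by
    rw [← reachSet_eq_of_subset hXX' (hX'W.trans hRU)]
    exact reachSet_subset_reachSet_of_disjoint (disjoint_setNbhd.mono_right Set.subset_union_left)
  by_contra hRsR
  exact himp U hUsep hUW ⟨hRU, fun h => hRsR (hRsU.trans h)⟩

/-- A separator of size at most `|T|` would give a minimum separator reaching `v` as well, against
the choice of `T`. -/
lemma ncard_lt (hT : IsFurthestMinSeparator G X' Y T) (hv : v ∈ T)
    (hU : IsSeparator G (insert v (reachSet G T X')) Y U)
    (hUX : Disjoint U (insert v (reachSet G T X'))) : T.ncard < U.ncard := by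
  set Rs := reachSet G T X'
  set R := reachSet G U (insert v Rs)
  by_contra! hUT
  have hRsR : insert v Rs ⊆ R := subset_reachSet_iff.2 hUX.symm
  have hX'R : X' ⊆ R :=
    (subset_reachSet_iff.2 hT.2.1.symm).trans ((Set.subset_insert v Rs).trans hRsR)
  have hle := (hT.2.2 (setNbhd G R)
    (isSeparator_setNbhd hX'R (isSeparator_iff_disjoint_reachSet.1 hU))
    (disjoint_setNbhd.mono_right hX'R)).2 ((Set.ncard_le_ncard setNbhd_reachSet_subset).trans hUT)
  have hRs : Rs ⊆ reachSet G (setNbhd G R) X' := reachSet_subset_reachSet_of_disjoint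
    (disjoint_setNbhd.mono_right ((Set.subset_insert v Rs).trans hRsR))
  rw [← hT.setNbhd_reachSet] at hv
  obtain ⟨hvRs, u, hu, huv⟩ := hv
  have hvR : v ∈ reachSet G (setNbhd G R) X' :=
    mem_reachSet_of_adj (hRs hu) huv
      (Set.disjoint_right.1 disjoint_setNbhd (hRsR (Set.mem_insert v Rs)))
  exact (Set.ncard_lt_ncard ⟨hRs, fun h => hvRs (h hvR)⟩).not_ge hle

lemma mem_importantSepsReaching_insert (hT : IsFurthestMinSeparator G X' Y T) (hXX' : X ⊆ X')
    (hv : v ∈ T) (hW : W ∈ importantSepsReaching G X Y X' p) (hvW : v ∉ W) :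
    W ∈ importantSepsReaching G X Y (insert v (reachSet G T X')) p := by
  refine ⟨hW.1, hW.2.1, Set.insert_subset ?_ (hT.reachSet_subset hXX' hW)⟩
  rw [← hT.setNbhd_reachSet] at hv
  obtain ⟨-, u, hu, huv⟩ := hv
  exact mem_reachSet_of_adj (hT.reachSet_subset hXX' hW hu) huv hvW

lemma importantSepsReaching_subset_singleton (hT : IsFurthestMinSeparator G X' Y ∅)
    (hXX' : X ⊆ X') :
    importantSepsReaching G X Y X' p ⊆ {setNbhd G (reachSet G ∅ X')} := by
  intro W hW
  have hR : reachSet G W X = reachSet G ∅ X' :=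
    ((reachSet_anti (Set.empty_subset W)).trans (reachSet_mono_source hXX')).antisymm
      (hT.reachSet_subset hXX' hW)
  rw [Set.mem_singleton_iff, ← hR,
    hW.1.setNbhd_reachSet (subset_reachSet_iff.1 (hXX'.trans hW.2.2)).symm]

end IsFurthestMinSeparator

lemma sdiff_singleton_mem_importantSepsReaching (hv : v ∉ X) (hvW : v ∈ W)
    (hW : W ∈ importantSepsReaching G X Y X' (p + 1)) :
    W \ {v} ∈ importantSepsReaching (G.deleteIncidenceSet v) X Y X' p := by
  obtain ⟨⟨hsep, hmin, himp⟩, hcard, hX'⟩ := hW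
  have hins : insert v (W \ {v}) = W := by rw [Set.insert_sdiff_singleton, Set.insert_eq_of_mem hvW]
  have hcardW : (W \ {v}).ncard + 1 = W.ncard := Set.ncard_sdiff_singleton_add_one hvW
  refine ⟨⟨(isSeparator_deleteIncidenceSet_iff hv).2 (by rwa [hins]), fun U hU hUsep => ?_,
    fun U hUsep hUW hlt => ?_⟩, by omega, ?_⟩
  · have hvU : v ∉ U := fun h => (hU h).2 rfl
    rw [← hmin (insert v U) (Set.insert_subset hvW (hU.trans Set.sdiff_subset))
      ((isSeparator_deleteIncidenceSet_iff hv).1 hUsep), Set.insert_sdiff_self_of_notMem hvU]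
  · rw [reachSet_deleteIncidenceSet hv, reachSet_deleteIncidenceSet hv, hins] at hlt
    exact himp _ ((isSeparator_deleteIncidenceSet_iff hv).1 hUsep)
      ((Set.ncard_insert_le v U).trans (by omega)) hlt
  · rwa [reachSet_deleteIncidenceSet hv, hins]

lemma ncard_importantSepsReaching_mem_le (hv : v ∉ X') (hXX' : X ⊆ X') :
    {W ∈ importantSepsReaching G X Y X' (p + 1) | v ∈ W}.ncard ≤
      (importantSepsReaching (G.deleteIncidenceSet v) X Y X' p).ncard := by
  refine Set.ncard_le_ncard_of_injOn (· \ {v})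
    (fun W hW => sdiff_singleton_mem_importantSepsReaching (fun h => hv (hXX' h)) hW.2 hW.1)
    (fun W₁ h₁ W₂ h₂ he => ?_)
  replace he : W₁ \ {v} = W₂ \ {v} := he
  rw [← Set.insert_eq_of_mem h₁.2, ← Set.insert_sdiff_singleton, he, Set.insert_sdiff_singleton,
    Set.insert_eq_of_mem h₂.2]

lemma importantSepsReaching_subset_empty
    (h : ∀ U, IsSeparator G X' Y U → Disjoint U X' → 2 * p ≤ U.ncard) (hXX' : X ⊆ X') :
    importantSepsReaching G X Y X' p ⊆ {∅} := by
  intro W hW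
  have h2 := h W (isSeparator_of_mem_importantSepsReaching hXX' hW).1
    (isSeparator_of_mem_importantSepsReaching hXX' hW).2
  exact (Set.ncard_eq_zero (Set.toFinite W)).1 (by have := hW.2.1; omega)

/-- `μ` bounds `2p - λ`, where `λ` is the minimum size of an `X'–Y` separator avoiding `X'`.
Branching on a vertex `v` of the furthest minimum separator `T`, the separators containing `v` are
counted without `v` in `G.deleteIncidenceSet v` (`p` drops by one, `λ` by at most one), the others with source `R(T) ∪ {v}`
(`λ` grows). -/
theorem ncard_importantSepsReaching_le (X Y : Set V) (μ : ℕ) :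
    ∀ (G : SimpleGraph V) (X' : Set V) (p : ℕ), X ⊆ X' →
      (∀ U, IsSeparator G X' Y U → Disjoint U X' → 2 * p ≤ U.ncard + μ) →
        (importantSepsReaching G X Y X' p).ncard ≤ 2 ^ μ := by
  induction μ with
  | zero =>
    intro G X' p hXX' hμ
    exact (Set.ncard_le_ncard (importantSepsReaching_subset_empty hμ hXX')).trans (by simp)
  | succ μ ih =>
    intro G X' p hXX' hμ
    rcases (importantSepsReaching G X Y X' p).eq_empty_or_nonempty with hF | ⟨W₀, hW₀⟩
    · simp [hF]
    obtain ⟨T, hT⟩ := exists_isFurthestMinSeparator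
      ⟨W₀, isSeparator_of_mem_importantSepsReaching hXX' hW₀⟩
    have hTp : T.ncard ≤ p := ((hT.2.2 W₀ (isSeparator_of_mem_importantSepsReaching hXX' hW₀).1
      (isSeparator_of_mem_importantSepsReaching hXX' hW₀).2).1).trans hW₀.2.1
    have hpT := hμ T hT.1 hT.2.1
    rcases T.eq_empty_or_nonempty with rfl | ⟨v, hv⟩
    · exact (Set.ncard_le_ncard (hT.importantSepsReaching_subset_singleton hXX')).trans
        (by simp [Nat.one_le_two_pow])
    have hT0 : 0 < T.ncard := (Set.ncard_pos (Set.toFinite T)).2 ⟨v, hv⟩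
    obtain ⟨p, rfl⟩ : ∃ q, p = q + 1 := ⟨p - 1, by omega⟩
    have hvX' : v ∉ X' := Set.disjoint_left.1 hT.2.1 hv
    have hX'Rs : X' ⊆ reachSet G T X' := subset_reachSet_iff.2 hT.2.1.symm
    set F := importantSepsReaching G X Y X' (p + 1)
    have hwith : {W ∈ F | v ∈ W}.ncard ≤ 2 ^ μ :=
      (ncard_importantSepsReaching_mem_le hvX' hXX').trans (ih _ X' p hXX' fun U hU hUX => by
        have := (hT.2.2 (insert v U) ((isSeparator_deleteIncidenceSet_iff hvX').1 hU)
          (Set.disjoint_insert_left.2 ⟨hvX', hUX⟩)).1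
        have := Set.ncard_insert_le v U
        omega)
    have hwithout : {W ∈ F | v ∉ W}.ncard ≤ 2 ^ μ :=
      (Set.ncard_le_ncard fun W hW => hT.mem_importantSepsReaching_insert hXX' hv hW.1 hW.2).trans
        (ih G _ (p + 1) (hXX'.trans (hX'Rs.trans (Set.subset_insert v _))) fun U hU hUX => by
          have := hT.ncard_lt hv hU hUX
          omega)
    calc F.ncard ≤ ({W ∈ F | v ∈ W} ∪ {W ∈ F | v ∉ W}).ncard :=
          Set.ncard_le_ncard fun W hW => (em (v ∈ W)).imp (⟨hW, ·⟩) (⟨hW, ·⟩)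
      _ ≤ {W ∈ F | v ∈ W}.ncard + {W ∈ F | v ∉ W}.ncard := Set.ncard_union_le _ _
      _ ≤ 2 ^ (μ + 1) := by rw [pow_succ]; omega

end counting

theorem ncard_importantSeparators_le [Finite V] (G : SimpleGraph V) (X Y : Set V) (p : ℕ) :
    {W | IsImportantSeparator G X Y W ∧ Disjoint W X ∧ W.ncard ≤ p}.ncard ≤ 4 ^ p :=
  calc _ ≤ (importantSepsReaching G X Y X p).ncard :=
        Set.ncard_le_ncard fun _ hW => ⟨hW.1, hW.2.2, subset_reachSet_iff.2 hW.2.1.symm⟩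
    _ ≤ 2 ^ (2 * p) :=
        ncard_importantSepsReaching_le X Y (2 * p) G X p le_rfl fun _ _ _ => by omega
    _ = 4 ^ p := by rw [pow_mul]; norm_num

lemma Set.ncard_biUnion_le_ncard_mul {ι α : Type*} {t : Set ι} (ht : t.Finite) {s : ι → Set α}
    {n : ℕ} (h : ∀ i ∈ t, (s i).ncard ≤ n) : (⋃ i ∈ t, s i).ncard ≤ t.ncard * n :=
  calc _ ≤ ∑ᶠ i ∈ t, (s i).ncard := ht.ncard_biUnion_le s
    _ = ∑ i ∈ ht.toFinset, (s i).ncard := finsum_mem_eq_finite_toFinset_sum _ ht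
    _ ≤ ht.toFinset.card • n := Finset.sum_le_card_nsmul _ _ _ fun i hi => h i (by simpa using hi)
    _ = t.ncard * n := by rw [smul_eq_mul, Set.ncard_eq_toFinset_card t ht]

section chips

variable {G : SimpleGraph V} {k : ℕ} {S A C C' D : Set V} {b w : V}

lemma reachSet_setNbhd_singleton (hC : (G.induce C).Connected) (hw : w ∈ C) :
    reachSet G (setNbhd G C) {w} = C :=
  (reachSet_subset_of_setNbhd_subset (Set.sdiff_subset.trans (Set.singleton_subset_iff.2 hw))
    le_rfl).antisymm fun _ hx =>
      ⟨w, ⟨rfl, Set.disjoint_right.1 disjoint_setNbhd hw⟩,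
        reachAvoid_of_connected hC hw hx disjoint_setNbhd.symm⟩

lemma IsChip.isImportantSeparator_singleton (hC : IsChip G k S C) (hw : w ∈ C) :
    IsImportantSeparator G {w} S (setNbhd G C) :=
  hC.2.2.of_subset_source (Set.singleton_subset_iff.2 hw) (reachSet_setNbhd_singleton hC.1 hw).ge

lemma ncard_chips_mem_le [Finite V] (w : V) : {C | IsChip G k S C ∧ w ∈ C}.ncard ≤ 4 ^ (3 * k) :=
  (Set.ncard_le_ncard_of_injOn (setNbhd G)
    (t := {W | IsImportantSeparator G {w} S W ∧ Disjoint W {w} ∧ W.ncard ≤ 3 * k})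
    (fun _ hC => ⟨hC.1.isImportantSeparator_singleton hC.2,
      Set.disjoint_singleton_right.2 (Set.disjoint_right.1 disjoint_setNbhd hC.2), hC.1.2.1⟩)
    fun C₁ h₁ C₂ h₂ he => by
      rw [← reachSet_setNbhd_singleton h₁.1.1 h₁.2, ← reachSet_setNbhd_singleton h₂.1.1 h₂.2]
      exact congrArg (reachSet G · {w}) he).trans
    (ncard_importantSeparators_le G {w} S (3 * k))

lemma ncard_biUnion_setNbhd_maximalChips_mem_le [Finite V] (w : V) :
    (⋃ C ∈ {C ∈ maximalChips G k S | w ∈ C}, setNbhd G C).ncard ≤ 4 ^ (3 * k) * (3 * k) :=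
  (Set.ncard_biUnion_le_ncard_mul (Set.toFinite _) fun _ hC => hC.1.1.2.1).trans
    (Nat.mul_le_mul_right _
      ((Set.ncard_le_ncard (t := {C | IsChip G k S C ∧ w ∈ C}) fun _ h => ⟨h.1.1, h.2⟩).trans
        (ncard_chips_mem_le w)))

lemma subset_of_connected_of_disjoint_setNbhd (hD : (G.induce D).Connected)
    (hDC : (D ∩ C).Nonempty) (hDN : Disjoint D (setNbhd G C)) : D ⊆ C :=
  let ⟨_, hdD, hdC⟩ := hDC
  fun _ hx => (reachAvoid_of_connected hD hdD hx hDN).mem_of_setNbhd_subset hdC le_rfl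

lemma IsCompOf.setNbhd_subset (hD : IsCompOf G A D) : setNbhd G D ⊆ A := by
  rintro b ⟨hbD, u, hu, hub⟩
  by_contra hbA
  have hconn : (G.induce (D ∪ {u, b})).Connected :=
    induce_union_connected hD.2.1.preconnected (induce_pair_connected_of_adj hub).preconnected
      ⟨u, hu, Set.mem_insert u _⟩
  have hsub : D ∪ {u, b} ⊆ Aᶜ :=
    Set.union_subset hD.1 (Set.insert_subset (hD.1 hu) (Set.singleton_subset_iff.2 hbA))
  exact hbD (hD.2.2 _ Set.subset_union_left hsub hconn ▸ Or.inr (Set.mem_insert_of_mem u rfl))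

lemma exists_mem_maximalChips_of_notMem_chipBag (hb : b ∉ chipBag G k S) :
    ∃ C ∈ maximalChips G k S, b ∈ C := by
  simp only [chipBag, Set.mem_union, Set.mem_iInter, Set.mem_iUnion, not_or, not_forall,
    Set.notMem_compl_iff, exists_prop] at hb
  obtain ⟨⟨C, hC, hbC⟩, hbN⟩ := hb
  exact ⟨C, hC, hbC.resolve_right fun h => hbN ⟨C, hC, h⟩⟩

lemma setNbhd_subset_chipBag (hC : C ∈ maximalChips G k S) : setNbhd G C ⊆ chipBag G k S :=
  fun _ h => Or.inr (Set.mem_biUnion hC h)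

/-- Otherwise `C'` would lie inside `C` by connectivity, and then equal it by maximality. -/
lemma inter_setNbhd_nonempty (hC : C ∈ maximalChips G k S) (hC' : C' ∈ maximalChips G k S)
    (hbC : b ∈ C) (hb : b ∈ setNbhd G C') : (C' ∩ setNbhd G C).Nonempty := by
  by_contra hne
  rw [Set.not_nonempty_iff_eq_empty, ← Set.disjoint_iff_inter_eq_empty] at hne
  obtain ⟨hbC', u, hu, hub⟩ := hb
  have huC : u ∈ C := by_contra fun huC => Set.disjoint_left.1 hne hu ⟨huC, b, hbC, hub.symm⟩
  have hCC' := hC'.2 C hC.1 (subset_of_connected_of_disjoint_setNbhd hC'.1.1 ⟨u, hu, huC⟩ hne)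
  exact hbC' (hCC' ▸ hbC)

lemma setNbhd_subset_of_isCompOf (hD : IsCompOf G (chipBag G k S) D)
    (hC : C ∈ maximalChips G k S) (hDC : D ⊆ C) :
    setNbhd G D ⊆ setNbhd G C ∪
      ⋃ w ∈ setNbhd G C, ⋃ C' ∈ {C' ∈ maximalChips G k S | w ∈ C'}, setNbhd G C' := by
  intro b hb
  by_cases hbC : b ∈ C
  · rcases hD.setNbhd_subset hb with hI | hU
    · exact absurd (Or.inl hbC) (Set.mem_iInter₂.1 hI C hC)
    · obtain ⟨C', hC', hbC'⟩ := Set.mem_iUnion₂.1 hU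
      obtain ⟨w, hwC', hwN⟩ := inter_setNbhd_nonempty hC hC' hbC hbC'
      exact Or.inr (Set.mem_biUnion hwN (Set.mem_biUnion ⟨hC', hwC'⟩ hbC'))
  · obtain ⟨-, u, hu, hub⟩ := hb
    exact Or.inl ⟨hbC, u, hDC hu, hub⟩

end chips

theorem comp_nbhd_small_general {V : Type*} [Fintype V]
    (G : SimpleGraph V) (k : ℕ) (S : Set V) :
    ∀ D : Set V, IsCompOf G (chipBag G k S) D →
      (setNbhd G D).ncard ≤ 3 * k * (3 * k * 4 ^ (3 * k) + 1) := by
  intro D hD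
  obtain ⟨d, hd⟩ := hD.2.1.nonempty
  obtain ⟨C, hC, hdC⟩ := exists_mem_maximalChips_of_notMem_chipBag (hD.1 hd)
  have hDC : D ⊆ C := subset_of_connected_of_disjoint_setNbhd hD.2.1 ⟨d, hd, hdC⟩
    (disjoint_compl_left.mono hD.1 (setNbhd_subset_chipBag hC))
  have hN : (setNbhd G C).ncard ≤ 3 * k := hC.1.2.1
  calc (setNbhd G D).ncard
      ≤ (setNbhd G C ∪ ⋃ w ∈ setNbhd G C,
          ⋃ C' ∈ {C' ∈ maximalChips G k S | w ∈ C'}, setNbhd G C').ncard :=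
        Set.ncard_le_ncard (setNbhd_subset_of_isCompOf hD hC hDC)
    _ ≤ 3 * k + 3 * k * (4 ^ (3 * k) * (3 * k)) :=
        (Set.ncard_union_le _ _).trans (add_le_add hN
          ((Set.ncard_biUnion_le_ncard_mul (Set.toFinite _) fun w _ => ncard_biUnion_setNbhd_maximalChips_mem_le w).trans
            (Nat.mul_le_mul_right _ hN)))
    _ = 3 * k * (3 * k * 4 ^ (3 * k) + 1) := by ring

/-- components of `G − A` have small neighbourhoods
(Lemma `A-small-neighbourhoods`). -/
theorem comp_nbhd_small {V : Type*} [Fintype V] [DecidableEq V]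
    (G : SimpleGraph V) (hG : G.Connected) (k : ℕ) (hk : 0 < k) (S : Set V) :
    ∀ D : Set V, IsCompOf G (chipBag G k S) D →
      (setNbhd G D).ncard ≤ 3 * k * (3 * k * 4 ^ (3 * k) + 1) :=
  comp_nbhd_small_general G k S
end

section
/- Let α ∈ (0,1) be a real number and let a₁, a₂, …, aₙ be real numbers with 0 ≤ aᵢ ≤ α for each i and ∑_{i=1}^{n} aᵢ = 1. Set ζ = 2⌈1/α⌉ − 1. Then there exists a function g : {1,…,n} → {1,…,ζ} such that for every j ∈ {1,…,ζ}, ∑_{i : g(i)=j} aᵢ ≤ α. -/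
open SimpleGraph

variable {V : Type*}

/-
Weights at most `α` with total at most `m α` (`m ≥ 1`) fit into `2m - 1` groups of weight at most
`α`; for `m = ⌈1/α⌉` this is the theorem. Induct on `m`: a largest subset `A` of weight at most `α`
is one group. Any remaining element `x` forms a group of its own, and since `A ∪ {x}` weighs more
than `α`, the rest weighs less than `(m - 1) α` and fits into `2m - 3` groups by induction.
-/

section Grouping

variable {ι : Type*}

def IsGrouping (s : Finset ι) (a : ι → ℝ) (α : ℝ) (k : ℕ) (g : ι → ℕ) : Prop :=
  (∀ i ∈ s, g i < k) ∧ ∀ j, ∑ i ∈ s with g i = j, a i ≤ α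

variable {s A : Finset ι} {a : ι → ℝ} {α : ℝ} {k : ℕ} {g : ι → ℕ}

theorem isGrouping_empty (hα : 0 ≤ α) : IsGrouping ∅ a α 0 g :=
  ⟨by simp, by simpa using hα⟩

theorem IsGrouping.mono_card {k' : ℕ} (h : IsGrouping s a α k g) (hk : k ≤ k') :
    IsGrouping s a α k' g :=
  ⟨fun i hi => (h.1 i hi).trans_le hk, h.2⟩

theorem IsGrouping.sdiff_cons [DecidableEq ι] (hA : A ⊆ s) (hAα : ∑ i ∈ A, a i ≤ α)
    (h : IsGrouping (s \ A) a α k g) :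
    IsGrouping s a α (k + 1) (fun i => if i ∈ A then 0 else g i + 1) := by
  refine ⟨fun i hi => ?_, fun j => ?_⟩
  · dsimp only
    split_ifs with hiA
    · exact k.succ_pos
    · exact Nat.succ_lt_succ (h.1 i (Finset.mem_sdiff.2 ⟨hi, hiA⟩))
  have hsplit : ∑ i ∈ s with (if i ∈ A then 0 else g i + 1) = j, a i =
      ∑ i ∈ s \ A with g i + 1 = j, a i + ∑ i ∈ A with 0 = j, a i := by
    rw [Finset.sum_filter, ← Finset.sum_sdiff hA, Finset.sum_filter, Finset.sum_filter]
    congr 1 <;> refine Finset.sum_congr rfl fun i hi => ?_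
    · rw [if_neg (Finset.mem_sdiff.1 hi).2]
    · rw [if_pos hi]
  rw [hsplit]
  cases j with
  | zero => simpa using hAα
  | succ j => simpa using h.2 j

theorem exists_isGrouping_of_sum_le [DecidableEq ι] (hα : 0 ≤ α) (hs : ∑ i ∈ s, a i ≤ α) :
    ∃ g, IsGrouping s a α 1 g :=
  ⟨_, IsGrouping.sdiff_cons (subset_refl s) hs
    (Finset.sdiff_self s ▸ isGrouping_empty (g := fun _ => 0) hα)⟩

theorem exists_subset_sum_le_forall_lt_sum_insert [DecidableEq ι] (hα : 0 ≤ α) :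
    ∃ A ⊆ s, ∑ i ∈ A, a i ≤ α ∧ ∀ x ∈ s \ A, α < ∑ i ∈ insert x A, a i := by
  obtain ⟨A, hA, hmax⟩ := (s.powerset.filter (fun A => ∑ i ∈ A, a i ≤ α)).exists_max_image
    Finset.card ⟨∅, by simpa using hα⟩
  rw [Finset.mem_filter, Finset.mem_powerset] at hA
  refine ⟨A, hA.1, hA.2, fun x hx => lt_of_not_ge fun hle => ?_⟩
  rw [Finset.mem_sdiff] at hx
  have := hmax (insert x A) (by simp [Finset.insert_subset hx.1 hA.1, hle])
  rw [Finset.card_insert_of_notMem hx.2] at this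
  omega

theorem exists_isGrouping_of_sum_le_mul [DecidableEq ι] (hα : 0 ≤ α) (ha : ∀ i ∈ s, a i ≤ α)
    (m : ℕ) (hs : ∑ i ∈ s, a i ≤ (m + 1) * α) : ∃ g, IsGrouping s a α (2 * m + 1) g := by
  induction m generalizing s with
  | zero => simpa using exists_isGrouping_of_sum_le hα (by simpa using hs)
  | succ m ih =>
    obtain ⟨A, hAs, hAα, hAmax⟩ := exists_subset_sum_le_forall_lt_sum_insert (s := s) (a := a) hα
    rcases (s \ A).eq_empty_or_nonempty with hsA | ⟨x, hx⟩
    · obtain ⟨g, hg⟩ := exists_isGrouping_of_sum_le hα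
        (s := s) (a := a) (by rwa [Finset.sdiff_eq_empty_iff_subset.1 hsA |>.antisymm hAs])
      exact ⟨g, hg.mono_card (by omega)⟩
    have hrest : ∑ i ∈ (s \ A) \ {x}, a i ≤ (m + 1) * α := by
      have h₁ := Finset.sum_sdiff (f := a) hAs
      have h₂ := Finset.sum_sdiff (f := a) (Finset.singleton_subset_iff.2 hx)
      have h₃ := hAmax x hx
      rw [Finset.sum_insert (Finset.mem_sdiff.1 hx).2] at h₃
      push_cast at hs
      simp only [Finset.sum_singleton] at h₂
      linarith
    obtain ⟨g, hg⟩ := ih (fun i hi => ha i (Finset.mem_sdiff.1 (Finset.mem_sdiff.1 hi).1).1) hrest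
    have hxα : ∑ i ∈ {x}, a i ≤ α := by simpa using ha x (Finset.mem_sdiff.1 hx).1
    have hg' := (hg.sdiff_cons (Finset.singleton_subset_iff.2 hx) hxα).sdiff_cons hAs hAα
    exact ⟨_, hg'.mono_card (by omega)⟩

end Grouping

/-- grouping numbers into `2⌈1/α⌉−1` groups of sum at most `α`
(Lemma 6.2). -/
theorem grouping {α : ℝ} (hα : α ∈ Set.Ioo (0 : ℝ) 1) (n : ℕ) (a : Fin n → ℝ)
    (ha : ∀ i, a i ∈ Set.Icc (0 : ℝ) α) (hsum : ∑ i, a i = 1) :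
    ∃ g : Fin n → Fin (2 * ⌈1 / α⌉₊ - 1),
      ∀ j, ∑ i ∈ Finset.univ.filter (fun i => g i = j), a i ≤ α := by
  set m := ⌈1 / α⌉₊
  have hm : 0 < m := Nat.ceil_pos.2 (one_div_pos.2 hα.1)
  have hmα : ∑ i, a i ≤ ((m - 1 : ℕ) + 1) * α := by
    rw [hsum, Nat.cast_sub hm, Nat.cast_one, sub_add_cancel]
    exact (div_le_iff₀ hα.1).1 (Nat.le_ceil _)
  obtain ⟨g, hg_lt, hg_sum⟩ := exists_isGrouping_of_sum_le_mul hα.1.le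
    (fun i _ => (ha i).2) (m - 1) hmα
  refine ⟨fun i => ⟨g i, by have := hg_lt i (Finset.mem_univ i); omega⟩, fun j => ?_⟩
  simpa only [Fin.ext_iff] using hg_sum j
end

section
/- Let G be a finite simple graph, k a nonnegative integer, A ⊆ V(G), and let v_a, v_b ∈ A be two distinct vertices. Suppose there are more than k distinct connected components D of G − A such that v_a ∈ N_G(V(D)) and v_b ∈ N_G(V(D)). Then for every set Z ⊆ V(G) ∖ {v_a, v_b} with |Z| ≤ k, the vertices v_a and v_b lie in the same connected component of G − Z. -/
open SimpleGraph

variable {V : Type*}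

/-- Pigeonhole: were every member to meet `Z`, picking a point of `Z` in each would be
injective on `𝒟`. -/
theorem Set.exists_disjoint_of_ncard_lt {𝒟 : Set (Set V)} (h𝒟 : 𝒟.PairwiseDisjoint id)
    {Z : Set V} (hZ : Z.Finite) (hcard : Z.ncard < 𝒟.ncard) :
    ∃ D ∈ 𝒟, Disjoint D Z := by
  by_contra! hmeet
  simp only [Set.not_disjoint_iff_nonempty_inter] at hmeet
  obtain ⟨D₀, hD₀⟩ := Set.nonempty_of_ncard_ne_zero (by omega : 𝒟.ncard ≠ 0)
  have : Nonempty V := ⟨(hmeet D₀ hD₀).some⟩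
  choose! f hf using hmeet
  have hinj : Set.InjOn f 𝒟 := fun D hD D' hD' hfD => by
    by_contra hne
    exact Set.disjoint_left.mp (h𝒟 hD hD' hne) (hf D hD).1 (hfD ▸ (hf D' hD').1)
  have := Set.ncard_le_ncard_of_injOn f (fun D hD => (hf D hD).2) hinj hZ
  omega

theorem pairwiseDisjoint_of_isCompOf {G : SimpleGraph V} {A : Set V} (𝒟 : Set (Set V))
    (h𝒟 : ∀ D ∈ 𝒟, IsCompOf G A D) : 𝒟.PairwiseDisjoint id := by
  intro D hD D' hD' hne
  rw [Function.onFun, id, id, Set.disjoint_iff_inter_eq_empty]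
  by_contra hmeet
  have hconn := G.induce_union_connected (h𝒟 D hD).2.1.preconnected
    (h𝒟 D' hD').2.1.preconnected (Set.nonempty_iff_ne_empty.mpr hmeet)
  have hA : D ∪ D' ⊆ Aᶜ := Set.union_subset (h𝒟 D hD).1 (h𝒟 D' hD').1
  exact hne <| ((h𝒟 D hD).2.2 _ Set.subset_union_left hA hconn).symm.trans
    ((h𝒟 D' hD').2.2 _ Set.subset_union_right hA hconn)

theorem reachAvoid_of_mem_setNbhd {G : SimpleGraph V} {D Z : Set V} {x y : V}
    (hD : (G.induce D).Preconnected) (hDZ : Disjoint D Z) (hxZ : x ∉ Z) (hyZ : y ∉ Z)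
    (hx : x ∈ setNbhd G D) (hy : y ∈ setNbhd G D) : ReachAvoid G Z x y := by
  obtain ⟨-, u, hu, hux⟩ := hx
  obtain ⟨-, w, hw, hwy⟩ := hy
  have hDZ' : D ⊆ Zᶜ := hDZ.subset_compl_right
  refine ⟨hxZ, hyZ, ?_⟩
  have huw : (G.induce Zᶜ).Reachable ⟨u, hDZ' hu⟩ ⟨w, hDZ' hw⟩ :=
    (hD ⟨u, hu⟩ ⟨w, hw⟩).map (G.induceHomOfLE hDZ').toHom
  have hxu : (G.induce Zᶜ).Adj ⟨x, hxZ⟩ ⟨u, hDZ' hu⟩ := hux.symm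
  have hwy : (G.induce Zᶜ).Adj ⟨w, hDZ' hw⟩ ⟨y, hyZ⟩ := hwy
  exact hxu.reachable.trans (huw.trans hwy.reachable)

/-- Removing `k` vertices leaves one of the more than `k` common components intact. -/
theorem many_common_components_inseparable_general {V : Type*} [Fintype V]
    (G : SimpleGraph V) (k : ℕ) (A : Set V) (va vb : V)
    (hmany : k <
      {D : Set V | IsCompOf G A D ∧ va ∈ setNbhd G D ∧ vb ∈ setNbhd G D}.ncard) :
    ∀ Z : Set V, Z ⊆ ({va, vb} : Set V)ᶜ → Z.ncard ≤ k →
      ReachAvoid G Z va vb := by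
  intro Z hZ hZcard
  obtain ⟨D, ⟨hD, hvaD, hvbD⟩, hDZ⟩ := Set.exists_disjoint_of_ncard_lt
    (pairwiseDisjoint_of_isCompOf _ fun _ hD => hD.1) Z.toFinite (hZcard.trans_lt hmany)
  exact reachAvoid_of_mem_setNbhd hD.2.1.preconnected hDZ
    (fun h => hZ h (Or.inl rfl)) (fun h => hZ h (Or.inr rfl)) hvaD hvbD

/-- two vertices adjacent to more than `k` common components of
`G − A` cannot be separated by removing at most `k` other vertices. -/
theorem many_common_components_inseparable {V : Type*} [Fintype V]
    [DecidableEq V] (G : SimpleGraph V) (k : ℕ) (A : Set V) (va vb : V)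
    (hva : va ∈ A) (hvb : vb ∈ A) (hab : va ≠ vb)
    (hmany : k <
      {D : Set V | IsCompOf G A D ∧ va ∈ setNbhd G D ∧ vb ∈ setNbhd G D}.ncard) :
    ∀ Z : Set V, Z ⊆ ({va, vb} : Set V)ᶜ → Z.ncard ≤ k →
      ReachAvoid G Z va vb :=
  many_common_components_inseparable_general G k A va vb hmany
end
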